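/- The set {ξ ∈ ℝ : v̂_{b,A}(ξ) ≥ η} has Hausdorff dimension zero. -/

import Mathlib

open Filter MeasureTheory Set

/-- Distance to the nearest integer. -/
noncomputable def dni (x : ℝ) : ℝ := |x - round x|

/-- Asymptotic approximation exponent `v_{b,A}(ξ)` (valued in `EReal`). -/
noncomputable def vbA (b : ℕ) (a : ℕ → ℕ) (ξ : ℝ) : EReal :=
  sSup ((fun v : ℝ => (v : EReal)) ''
    {v : ℝ | 0 ≤ v ∧ ∃ᶠ n in atTop, 1 ≤ n ∧
      dni ((b : ℝ) ^ (a n) * ξ) < (b : ℝ) ^ (-(a n : ℝ) * v)})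

/-- Uniform approximation exponent `v̂_{b,A}(ξ)` (valued in `EReal`). -/
noncomputable def vhatbA (b : ℕ) (a : ℕ → ℕ) (ξ : ℝ) : EReal :=
  sSup ((fun v : ℝ => (v : EReal)) ''
    {v : ℝ | 0 ≤ v ∧ ∀ᶠ N in atTop, ∃ n, 1 ≤ n ∧ n ≤ N ∧
      dni ((b : ℝ) ^ (a n) * ξ) < (b : ℝ) ^ (-(a N : ℝ) * v)})

/-!
Write `‖b ^ x ξ‖ = b ^ (-R x)`. For irrational `ξ`, if `‖b ^ p ξ‖ < b ^ (p - q - 1)` then the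
base-`b` digits of `ξ` between positions `p` and `q` are constant, so the end `x + R x` of the run
of equal digits is the same at `p` and at `q`. If `v̂_{b,A}(ξ) ≥ η`, compare the leftmost `a_k` on a
run with the first `a_N` that this run no longer serves: the index serving `a_N` lies beyond the
run, and the growth bound `a_{N+1} ≤ (η + ε) a_N` then forces `R (a_n) > w a_n` for infinitely many
`n`, whatever `w` is. Hence `v_{b,A}(ξ) = ∞` for every irrational `ξ` in the set. For each `w`, the
`ξ` with `‖b ^ (a n) ξ‖ < b ^ (-w a n)` infinitely often lie in infinitely many intervals of radius
`b ^ (-(1 + w) a n)` around the `b ^ (a n)`-adic rationals, whose `s`-dimensional Hausdorff sums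
converge once `s (1 + w) > 1`. The rationals are countable.
-/

open Metric Topology
open scoped ENNReal

lemma dni_eq_zero_iff {x : ℝ} : dni x = 0 ↔ ∃ m : ℤ, x = m :=
  ⟨fun h => ⟨round x, sub_eq_zero.mp (abs_eq_zero.mp h)⟩,
    fun ⟨m, hm⟩ => by simp [dni, hm, round_intCast]⟩

lemma Irrational.dni_ne_zero {x : ℝ} (hx : Irrational x) : dni x ≠ 0 := fun h =>
  let ⟨m, hm⟩ := dni_eq_zero_iff.mp h
  hx.ne_int m hm

lemma Irrational.dni_pow_mul_pos {ξ : ℝ} (hξ : Irrational ξ) {b : ℕ} (hb : b ≠ 0) (x : ℕ) :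
    0 < dni ((b : ℝ) ^ x * ξ) :=
  (abs_nonneg _).lt_of_ne' (by exact_mod_cast (hξ.natCast_mul (pow_ne_zero x hb)).dni_ne_zero)

lemma dni_natCast_mul {n : ℕ} {x : ℝ} (h : n * dni x < 1 / 2) : dni (n * x) = n * dni x := by
  have hdist : |n * x - (n * round x : ℤ)| = n * dni x := by
    rw [Int.cast_mul, Int.cast_natCast, ← mul_sub, abs_mul, Nat.abs_cast, dni]
  have hround : round (n * x) = n * round x := by
    rw [round_eq_iff]
    constructor <;> linarith [abs_lt.mp (hdist ▸ h)]
  rw [← hdist, dni, hround]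

/-- `R x` behaves like the length of a run of equal digits starting after position `x`: when the
run starting at `p` reaches beyond `q + 1`, the runs starting at `p` and at `q` end at the same
place. -/
def IsRunLength (R : ℕ → ℝ) : Prop :=
  ∀ ⦃p q : ℕ⦄, p ≤ q → (q : ℝ) + 1 < p + R p → (q : ℝ) + R q = p + R p

/-- `b ^ (-dniExponent b ξ x) = ‖b ^ x ξ‖`, provided the latter is nonzero (`logb b 0 = 0`). -/
noncomputable def dniExponent (b : ℕ) (ξ : ℝ) (x : ℕ) : ℝ :=
  -Real.logb b (dni ((b : ℝ) ^ x * ξ))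

section dniExponent

variable {b : ℕ} {ξ : ℝ}

lemma dni_lt_rpow_neg_iff (hb : 1 < b) (hξ : Irrational ξ) (x : ℕ) (t : ℝ) :
    dni ((b : ℝ) ^ x * ξ) < (b : ℝ) ^ (-t) ↔ t < dniExponent b ξ x := by
  rw [dniExponent, lt_neg,
    ← Real.logb_lt_iff_lt_rpow (by exact_mod_cast hb) (hξ.dni_pow_mul_pos (by omega) x)]

lemma isRunLength_dniExponent (hb : 2 ≤ b) (hξ : Irrational ξ) :
    IsRunLength (dniExponent b ξ) := by
  intro p q hpq hrun
  have hb1 : (1 : ℝ) < b := by exact_mod_cast hb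
  have hb0 : (0 : ℝ) < b := by positivity
  set D := dni ((b : ℝ) ^ p * ξ)
  have hD : 0 < D := hξ.dni_pow_mul_pos (by omega) p
  have hDlt : D < (b : ℝ) ^ (-((q - p : ℕ) + 1 : ℝ)) := by
    rw [dni_lt_rpow_neg_iff (by omega) hξ, Nat.cast_sub hpq]
    linarith
  have hsmall : ((b ^ (q - p) : ℕ) : ℝ) * D < 1 / 2 := calc
    ((b ^ (q - p) : ℕ) : ℝ) * D
        < (b : ℝ) ^ ((q - p : ℕ) : ℝ) * (b : ℝ) ^ (-((q - p : ℕ) + 1 : ℝ)) := by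
          push_cast; rw [Real.rpow_natCast]; gcongr
    _ = (b : ℝ)⁻¹ := by rw [← Real.rpow_add hb0, ← Real.rpow_neg_one]; ring_nf
    _ ≤ 1 / 2 := by rw [one_div]; gcongr; exact_mod_cast hb
  have hq : dni ((b : ℝ) ^ q * ξ) = (b : ℝ) ^ (q - p) * D := by
    have := dni_natCast_mul hsmall
    push_cast at this
    rwa [← mul_assoc, ← pow_add, Nat.sub_add_cancel hpq] at this
  rw [dniExponent, dniExponent, hq, Real.logb_mul (by positivity) hD.ne', Real.logb_pow,
    Real.logb_self_eq_one hb1, Nat.cast_sub hpq]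
  ring

end dniExponent

section RunEndpoints

variable {R : ℕ → ℝ} {a : ℕ → ℕ} {w v c : ℝ}

lemma run_end_le_succ_of_serving
    (hR : IsRunLength R)
    (hw : 0 < w) (hwv : w ≤ v * (1 + w)) {x y z : ℕ}
    (hmin : (y : ℝ) + R y = x + R x → x ≤ y) (hcap : R y ≤ w * y) (hxz : (x : ℝ) + 1 ≤ z)
    (hx : R x < v * z) (hy : v * z < R y) :
    (x : ℝ) + R x ≤ y + 1 := by
  by_contra! hend
  rcases lt_or_ge y x with hyx | hxy
  · have hrun : (x : ℝ) + 1 < y + R y := by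
      have hz : w * z ≤ v * (1 + w) * z := mul_le_mul_of_nonneg_right hwv (Nat.cast_nonneg z)
      have hRy : (1 + w) * (v * z) < (1 + w) * R y := mul_lt_mul_of_pos_left hy (by linarith)
      have : w * ((x : ℝ) + 1) < w * (y + R y) := by nlinarith
      exact lt_of_mul_lt_mul_left this hw.le
    have := hmin (hR hyx.le hrun).symm
    omega
  · have : (x : ℝ) ≤ y := by exact_mod_cast hxy
    linarith [hR hxy (by linarith)]

lemma eventually_exists_ge_of_eventually_exists (ha : StrictMono a) (hv : 0 < v)
    (hserve : ∀ᶠ N in atTop, ∃ n ≤ N, v * a N < R (a n)) (n₁ : ℕ) :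
    ∀ᶠ N in atTop, ∃ n, n₁ ≤ n ∧ n ≤ N ∧ v * a N < R (a n) := by
  have htend : Tendsto (fun N => v * (a N : ℝ)) atTop atTop :=
    (tendsto_natCast_atTop_atTop.comp ha.tendsto_atTop).const_mul_atTop hv
  have hlarge : ∀ᶠ N in atTop, ∀ j ∈ Finset.range n₁, R (a j) < v * a N :=
    (Finset.eventually_all _).2 fun j _ => htend.eventually_gt_atTop _
  filter_upwards [hserve, hlarge] with N ⟨n, hnN, hn⟩ hlarge
  refine ⟨n, not_lt.mp fun h => ?_, hnN, hn⟩
  exact (hlarge n (Finset.mem_range.mpr h)).asymm hn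

lemma mul_run_end_le (hw : 0 ≤ w) (hv : 0 ≤ v) (hc : 0 ≤ c) {x r y z z' : ℝ}
    (hcap : r ≤ w * x) (hend : x + r ≤ y + 1) (hyz : y ≤ z) (hz : z ≤ c * z')
    (hz' : v * z' ≤ r) :
    (v * (1 + w) - c * w) * (x + r) ≤ v * (1 + w) := by
  have hend' : v * (x + r - 1) ≤ c * r := by
    nlinarith [mul_le_mul_of_nonneg_left hz hv, mul_le_mul_of_nonneg_left hz' hc]
  nlinarith [mul_le_mul_of_nonneg_left hend' (by linarith : (0 : ℝ) ≤ 1 + w),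
    mul_le_mul_of_nonneg_left hcap hc]

/-- Take the leftmost `a k` (with `k ≥ n₁`) on a run ending at `E`, and the first `N` with
`v a_N > R (a k)`. The index serving `N` can neither precede `a k` (its run would reach `a k`) nor
lie inside the run, so it sits near `E`; then `E - 1 ≤ a_N ≤ c a_{N-1} ≤ c R (a k) / v`, while the
cap `R (a k) ≤ w a k` gives `R (a k) ≤ w E / (1 + w)`, which is absurd for large `E`. -/
theorem frequently_mul_lt_of_eventually_exists_mul_lt
    (hR : IsRunLength R)
    (ha : StrictMono a) (hw : 0 < w) (hv : 0 < v) (hc : 1 ≤ c) (hcv : c * w < v * (1 + w))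
    (hratio : ∀ᶠ N in atTop, (a (N + 1) : ℝ) ≤ c * a N)
    (hserve : ∀ᶠ N in atTop, ∃ n ≤ N, v * a N < R (a n)) :
    ∃ᶠ n in atTop, w * a n < R (a n) := by
  classical
  by_contra hcon
  obtain ⟨n₁, hcap⟩ := eventually_atTop.mp (not_frequently.mp hcon)
  have hδ : 0 < v * (1 + w) - c * w := by linarith
  have htend : Tendsto (fun N => v * (a N : ℝ)) atTop atTop :=
    (tendsto_natCast_atTop_atTop.comp ha.tendsto_atTop).const_mul_atTop hv
  obtain ⟨N₀, hN₀⟩ := eventually_atTop.mp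
    ((eventually_exists_ge_of_eventually_exists ha hv hserve n₁).and
      (hratio.and (htend.eventually_gt_atTop (v * (1 + w) / (v * (1 + w) - c * w)))))
  obtain ⟨n₀, hn₀₁, hn₀N₀, hn₀⟩ := (hN₀ N₀ le_rfl).1
  have hk : ∃ k, n₁ ≤ k ∧ (a k : ℝ) + R (a k) = a n₀ + R (a n₀) := ⟨n₀, hn₀₁, rfl⟩
  set k := Nat.find hk
  obtain ⟨hk₁, hkE⟩ := Nat.find_spec hk
  have hkn₀ : k ≤ n₀ := Nat.find_min' hk ⟨hn₀₁, rfl⟩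
  have hRk : v * a N₀ < R (a k) := by
    have : (a k : ℝ) ≤ a n₀ := by exact_mod_cast ha.monotone hkn₀
    linarith
  have hN : ∃ N, R (a k) < v * a N := (htend.eventually_gt_atTop _).exists
  set N := Nat.find hN
  have hN₀N : N₀ < N := by
    by_contra! h
    have : (a N : ℝ) ≤ a N₀ := by exact_mod_cast ha.monotone h
    nlinarith [Nat.find_spec hN]
  have hprev : v * a (N - 1) ≤ R (a k) := not_lt.mp (Nat.find_min hN (by omega))
  have hratioN : (a N : ℝ) ≤ c * a (N - 1) := by
    simpa [Nat.sub_add_cancel (by omega : 1 ≤ N)] using (hN₀ (N - 1) (by omega)).2.1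
  obtain ⟨n, hn₁, hnN, hn⟩ := (hN₀ N hN₀N.le).1
  have hend : (a k : ℝ) + R (a k) ≤ a n + 1 :=
    run_end_le_succ_of_serving hR hw (by nlinarith) (x := a k) (y := a n) (z := a N)
      (fun h => ha.monotone (Nat.find_min' hk ⟨hn₁, h.trans hkE⟩)) (not_lt.mp (hcap n hn₁))
      (by exact_mod_cast ha (hkn₀.trans_lt (hn₀N₀.trans_lt hN₀N))) (Nat.find_spec hN) hn
  have hlarge : v * (1 + w) < (v * (1 + w) - c * w) * (a k + R (a k)) := by
    have := (div_lt_iff₀ hδ).mp (hN₀ N₀ le_rfl).2.2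
    nlinarith [(Nat.cast_nonneg (a k) : (0 : ℝ) ≤ a k)]
  exact (mul_run_end_le hw.le hv.le (zero_le_one.trans hc) (not_lt.mp (hcap k hk₁)) hend
    (by exact_mod_cast ha.monotone hnN) hratioN hprev).not_gt hlarge

end RunEndpoints

theorem hausdorffMeasure_setOf_frequently_mem_eq_zero {X : Type*} [EMetricSpace X]
    [MeasurableSpace X] [BorelSpace X] {ι : ℕ → Type*} [∀ n, Countable (ι n)]
    (C : ∀ n, ι n → Set X) {r : ℕ → ℝ≥0∞} (hr : Antitone r) (hr0 : Tendsto r atTop (𝓝 0))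
    (hdiam : ∀ n i, ediam (C n i) ≤ r n) {d : ℝ} (hsum : ∑' n, ∑' i, ediam (C n i) ^ d ≠ ∞) :
    μH[d] {x | ∃ᶠ n in atTop, ∃ i, x ∈ C n i} = 0 := by
  set t : ∀ N, (Σ k, ι (k + N)) → Set X := fun N σ => C (σ.1 + N) σ.2
  have hcover : ∀ N, {x | ∃ᶠ n in atTop, ∃ i, x ∈ C n i} ⊆ ⋃ σ, t N σ := by
    intro N x hx
    obtain ⟨n, hNn, i, hi⟩ := frequently_atTop.mp hx N
    obtain ⟨k, rfl⟩ : ∃ k, n = k + N := ⟨n - N, by omega⟩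
    exact mem_iUnion.mpr ⟨⟨k, i⟩, hi⟩
  refine le_antisymm ?_ zero_le
  calc μH[d] {x | ∃ᶠ n in atTop, ∃ i, x ∈ C n i}
      ≤ liminf (fun N => ∑' σ, ediam (t N σ) ^ d) atTop :=
        Measure.hausdorffMeasure_le_liminf_tsum d _ r hr0 t
          (Eventually.of_forall fun N σ => (hdiam _ _).trans (hr (Nat.le_add_left N σ.1)))
          (Eventually.of_forall hcover)
    _ = liminf (fun N => ∑' k, ∑' i, ediam (C (k + N) i) ^ d) atTop := by
        simp only [t, ENNReal.tsum_sigma']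
    _ = 0 := (ENNReal.tendsto_sum_nat_add _ hsum).liminf_eq

lemma exists_dist_le_dni_div {B : ℕ} (hB : 0 < B) {M : ℤ} {ξ : ℝ} (hξ : ξ ∈ Icc (M : ℝ) (M + 1)) :
    ∃ j : Fin (B + 1), dist ξ (M + j / B) ≤ dni (B * ξ) / B := by
  have hB' : (0 : ℝ) < B := by exact_mod_cast hB
  set p := round (B * ξ)
  have hp := abs_le.mp (abs_sub_round (B * ξ))
  have hlo : B * (M : ℝ) ≤ B * ξ := mul_le_mul_of_nonneg_left hξ.1 hB'.le
  have hhi : B * ξ ≤ B * ((M : ℝ) + 1) := mul_le_mul_of_nonneg_left hξ.2 hB'.le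
  have hj0 : 0 ≤ p - B * M := by
    have : (-1 : ℝ) < ((p - B * M : ℤ) : ℝ) := by push_cast; linarith
    exact_mod_cast Int.le_of_sub_one_lt (by exact_mod_cast this)
  have hjB : p - B * M ≤ B := by
    have : ((p - B * M : ℤ) : ℝ) < B + 1 := by push_cast; linarith
    exact Int.lt_add_one_iff.mp (by exact_mod_cast this)
  refine ⟨⟨(p - B * M).toNat, by omega⟩, ?_⟩
  have hj : (((p - B * M).toNat : ℕ) : ℝ) = p - B * M := by
    exact_mod_cast Int.toNat_of_nonneg hj0
  have hdiff : ξ - (M + (p - B * M) / B) = (B * ξ - p) / B := by field_simp; ring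
  rw [Fin.val_mk, hj, Real.dist_eq, hdiff, abs_div, abs_of_pos hB']
  rfl

section Jarnik

variable {b : ℕ} {w : ℝ}

lemma exists_mem_closedBall_of_dni_lt (hb : 1 < b) {x : ℕ} {ξ : ℝ}
    (h : dni ((b : ℝ) ^ x * ξ) < (b : ℝ) ^ (-(x : ℝ) * w)) :
    ∃ j : Fin (b ^ x + 1),
      ξ ∈ closedBall ((⌊ξ⌋ : ℝ) + j / (b ^ x : ℕ)) (((b : ℝ) ^ (-(1 + w))) ^ x) := by
  have hb0 : (0 : ℝ) < b := by positivity
  obtain ⟨j, hj⟩ := exists_dist_le_dni_div (B := b ^ x) (by positivity)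
    ⟨Int.floor_le ξ, (Int.lt_floor_add_one ξ).le⟩
  refine ⟨j, hj.trans ?_⟩
  push_cast
  rw [div_le_iff₀ (by positivity)]
  calc dni ((b : ℝ) ^ x * ξ) ≤ (b : ℝ) ^ (-(x : ℝ) * w) := h.le
    _ = ((b : ℝ) ^ (-(1 + w))) ^ x * (b : ℝ) ^ x := by
      rw [← Real.rpow_mul_natCast hb0.le, ← Real.rpow_natCast _ x, ← Real.rpow_add hb0]
      ring_nf

lemma natCast_pow_add_one_mul_rpow_le (hb : 1 ≤ b) {q : ℝ} (hq : 0 ≤ q) (s : ℝ) (x : ℕ) :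
    ((b ^ x + 1 : ℕ) : ℝ) * (2 * q ^ x) ^ s ≤ 2 ^ (s + 1) * (b * q ^ s) ^ x := by
  have hB : ((b ^ x + 1 : ℕ) : ℝ) ≤ 2 * b ^ x := by
    push_cast
    linarith [one_le_pow₀ (n := x) (show (1 : ℝ) ≤ b by exact_mod_cast hb)]
  calc ((b ^ x + 1 : ℕ) : ℝ) * (2 * q ^ x) ^ s ≤ (2 * b ^ x) * (2 ^ s * (q ^ s) ^ x) := by
        rw [Real.mul_rpow zero_le_two (by positivity), ← Real.rpow_pow_comm hq]
        gcongr
    _ = 2 ^ (s + 1) * (b * q ^ s) ^ x := by rw [Real.rpow_add_one two_ne_zero, mul_pow]; ring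

lemma tsum_ofReal_two_mul_pow_rpow_ne_top (hb : 1 ≤ b) {a : ℕ → ℕ} (ha : StrictMono a) {q s : ℝ}
    (hq : 0 ≤ q) (hs : 0 ≤ s) (hgeom : b * q ^ s < 1) :
    ∑' n, ∑' _ : Fin (b ^ a n + 1), ENNReal.ofReal (2 * q ^ a n) ^ s ≠ ∞ := by
  refine (lt_of_le_of_lt (b := ∑' n, ENNReal.ofReal (2 ^ (s + 1) * (b * q ^ s) ^ n))
    (ENNReal.tsum_le_tsum fun n => ?_) ?_).ne
  · simp only [tsum_fintype, Finset.sum_const, Finset.card_univ, Fintype.card_fin, nsmul_eq_mul]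
    rw [ENNReal.ofReal_rpow_of_nonneg (by positivity) hs, ← ENNReal.ofReal_natCast,
      ← ENNReal.ofReal_mul (by positivity)]
    refine ENNReal.ofReal_le_ofReal ((natCast_pow_add_one_mul_rpow_le hb hq s _).trans ?_)
    exact mul_le_mul_of_nonneg_left (pow_le_pow_of_le_one (by positivity) hgeom.le ha.le_apply)
      (by positivity)
  · rw [← ENNReal.ofReal_tsum_of_nonneg (fun n => by positivity)
      ((summable_geometric_of_lt_one (by positivity) hgeom).mul_left _)]
    exact ENNReal.ofReal_lt_top

theorem hausdorffMeasure_setOf_frequently_dni_lt_eq_zero (hb : 1 < b) {a : ℕ → ℕ}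
    (ha : StrictMono a) (hw : 0 ≤ w) {s : ℝ} (hs : 1 < s * (1 + w)) :
    μH[s] {ξ : ℝ | ∃ᶠ n in atTop, dni ((b : ℝ) ^ a n * ξ) < (b : ℝ) ^ (-(a n : ℝ) * w)} = 0 := by
  have hb1 : (1 : ℝ) < b := by exact_mod_cast hb
  have hb0 : (0 : ℝ) < b := zero_lt_one.trans hb1
  have hs0 : 0 < s := by by_contra! h; nlinarith
  set q := (b : ℝ) ^ (-(1 + w))
  have hq0 : 0 < q := Real.rpow_pos_of_pos hb0 _
  have hq1 : q < 1 := Real.rpow_lt_one_of_one_lt_of_neg hb1 (by linarith)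
  have hgeom : b * q ^ s < 1 := by
    rw [← Real.rpow_mul hb0.le, ← Real.rpow_one_add' hb0.le (by nlinarith)]
    exact Real.rpow_lt_one_of_one_lt_of_neg hb1 (by nlinarith)
  set C : ℤ → ∀ n, Fin (b ^ a n + 1) → Set ℝ :=
    fun M n j => closedBall (M + j / (b ^ a n : ℕ)) (q ^ a n)
  have hcover : {ξ : ℝ | ∃ᶠ n in atTop, dni ((b : ℝ) ^ a n * ξ) < (b : ℝ) ^ (-(a n : ℝ) * w)} ⊆
      ⋃ M : ℤ, {ξ | ∃ᶠ n in atTop, ∃ j, ξ ∈ C M n j} := fun ξ hξ =>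
    mem_iUnion.mpr ⟨⌊ξ⌋, hξ.mono fun n hn => exists_mem_closedBall_of_dni_lt hb hn⟩
  have hdiam : ∀ M n j, ediam (C M n j) = ENNReal.ofReal (2 * q ^ a n) := fun M n j => by
    simp only [C, Real.closedBall_eq_Icc, Real.ediam_Icc]
    ring_nf
  refine measure_mono_null hcover (measure_iUnion_null fun M => ?_)
  refine hausdorffMeasure_setOf_frequently_mem_eq_zero (C M)
    (r := fun n => ENNReal.ofReal (2 * q ^ a n)) (fun m n h => ENNReal.ofReal_le_ofReal ?_) ?_
    (fun n j => (hdiam M n j).le) ?_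
  · exact mul_le_mul_of_nonneg_left (pow_le_pow_of_le_one hq0.le hq1.le (ha.monotone h)) zero_le_two
  · simpa using ENNReal.tendsto_ofReal
      (((tendsto_pow_atTop_nhds_zero_of_lt_one hq0.le hq1).comp ha.tendsto_atTop).const_mul 2)
  · simpa only [hdiam] using tsum_ofReal_two_mul_pow_rpow_ne_top hb.le ha hq0.le hs0.le hgeom

end Jarnik

section Exponents

variable {b : ℕ} {a : ℕ → ℕ} {ξ : ℝ}

lemma exists_lt_of_lt_vhatbA {t : ℝ} (h : (t : EReal) < vhatbA b a ξ) :
    ∃ v : ℝ, t < v ∧ ∀ᶠ N in atTop, ∃ n ≤ N,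
      dni ((b : ℝ) ^ a n * ξ) < (b : ℝ) ^ (-(a N : ℝ) * v) := by
  obtain ⟨_, ⟨v, ⟨-, hv⟩, rfl⟩, htv⟩ := lt_sSup_iff.mp h
  exact ⟨v, EReal.coe_lt_coe_iff.mp htv, hv.mono fun N ⟨n, _, hnN, hn⟩ => ⟨n, hnN, hn⟩⟩

lemma exists_lt_of_lt_vbA {t : ℝ} (h : (t : EReal) < vbA b a ξ) :
    ∃ v : ℝ, t < v ∧ ∃ᶠ n in atTop, dni ((b : ℝ) ^ a n * ξ) < (b : ℝ) ^ (-(a n : ℝ) * v) := by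
  obtain ⟨_, ⟨v, ⟨-, hv⟩, rfl⟩, htv⟩ := lt_sSup_iff.mp h
  exact ⟨v, EReal.coe_lt_coe_iff.mp htv, hv.mono fun n hn => hn.2⟩

lemma vbA_eq_top_of_forall_frequently
    (h : ∀ w : ℝ, 0 < w → ∃ᶠ n in atTop, dni ((b : ℝ) ^ a n * ξ) < (b : ℝ) ^ (-(a n : ℝ) * w)) :
    vbA b a ξ = ⊤ := by
  refine (EReal.eq_top_iff_forall_lt _).mpr fun y => ?_
  have hw : 0 < max y 0 + 1 := by positivity
  refine (EReal.coe_lt_coe_iff.mpr (by linarith [le_max_left y 0] : y < max y 0 + 1)).trans_le ?_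
  exact le_sSup ⟨_, ⟨hw.le, ((h _ hw).and_eventually (eventually_ge_atTop 1)).mono
    fun n hn => ⟨hn.2, hn.1⟩⟩, rfl⟩

theorem dimH_setOf_vbA_eq_top (hb : 1 < b) (ha : StrictMono a) :
    dimH {ξ : ℝ | vbA b a ξ = ⊤} = 0 := by
  have hb1 : (1 : ℝ) ≤ b := by exact_mod_cast hb.le
  refine le_antisymm (ENNReal.le_of_forall_pos_le_add fun d hd _ => ?_) zero_le
  rw [zero_add]
  refine dimH_le_of_hausdorffMeasure_ne_top (ne_top_of_le_ne_top ENNReal.zero_ne_top ?_)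
  have hd' : (0 : ℝ) < d := hd
  refine (measure_mono fun ξ (hξ : vbA b a ξ = ⊤) => ?_).trans_eq
    (hausdorffMeasure_setOf_frequently_dni_lt_eq_zero hb ha (w := 1 / d) (by positivity)
      (by field_simp; linarith))
  obtain ⟨v, hv, hfreq⟩ := exists_lt_of_lt_vbA (t := 1 / d) (hξ ▸ EReal.coe_lt_top _)
  exact hfreq.mono fun n hn => hn.trans_le (Real.rpow_le_rpow_of_exponent_le hb1
    (by nlinarith [(Nat.cast_nonneg (a n) : (0 : ℝ) ≤ a n)]))

theorem vbA_eq_top_of_le_vhatbA (hb : 2 ≤ b) (ha : StrictMono a) {η : ℝ} (hη : 1 ≤ η)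
    (hratio : ∀ ε > 0, ∀ᶠ N in atTop, (a (N + 1) : ℝ) ≤ (η + ε) * a N) (hξ : Irrational ξ)
    (h : (η : EReal) ≤ vhatbA b a ξ) : vbA b a ξ = ⊤ := by
  have hlt (x : ℕ) (t : ℝ) := dni_lt_rpow_neg_iff (b := b) (by omega) hξ x t
  refine vbA_eq_top_of_forall_frequently fun w hw => ?_
  -- `ε (1 + 2 w) < η` is what makes `(η + ε) w < (η - ε) (1 + w)`.
  set ε := η / (2 * (1 + 2 * w))
  have hε : 0 < ε := by positivity
  have hεw : ε * (1 + 2 * w) = η / 2 := by simp only [ε]; field_simp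
  have hεη : ε ≤ η / 2 := by nlinarith
  obtain ⟨v, hv, hserve⟩ := exists_lt_of_lt_vhatbA (t := η - ε)
    ((EReal.coe_lt_coe_iff.mpr (by linarith)).trans_le h)
  have hserve' : ∀ᶠ N in atTop, ∃ n ≤ N, v * a N < dniExponent b ξ (a n) :=
    hserve.mono fun N ⟨n, hnN, hn⟩ => ⟨n, hnN, by rw [neg_mul, hlt] at hn; linarith⟩
  have hfreq := frequently_mul_lt_of_eventually_exists_mul_lt (c := η + ε)
    (isRunLength_dniExponent hb hξ) ha hw (by linarith) (by linarith)
    (by nlinarith [mul_lt_mul_of_pos_right hv (by linarith : (0 : ℝ) < 1 + w)]) (hratio ε hε)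
    hserve'
  exact hfreq.mono fun n hn => by rw [neg_mul, hlt]; linarith

end Exponents

section RatioLimsup

variable {u : ℕ → ℝ}

lemma one_le_limsup_succ_div (hu : Monotone u) (hpos : ∀ᶠ n in atTop, 0 < u n)
    (hbdd : IsBoundedUnder (· ≤ ·) atTop fun n => u (n + 1) / u n) :
    1 ≤ limsup (fun n => u (n + 1) / u n) atTop :=
  le_limsup_of_frequently_le (hpos.mono fun n hn =>
    (one_le_div₀ hn).mpr (hu n.le_succ)).frequently hbdd

lemma eventually_succ_le_mul_of_limsup_lt (hpos : ∀ᶠ n in atTop, 0 < u n)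
    (hbdd : IsBoundedUnder (· ≤ ·) atTop fun n => u (n + 1) / u n) {c : ℝ}
    (hc : limsup (fun n => u (n + 1) / u n) atTop < c) :
    ∀ᶠ n in atTop, u (n + 1) ≤ c * u n := by
  filter_upwards [eventually_lt_of_limsup_lt hc hbdd, hpos] with n hn hn0
  exact ((div_lt_iff₀ hn0).mp hn).le

end RatioLimsup

theorem stmt7_general (b : ℕ) (hb : 2 ≤ b) (a : ℕ → ℕ) (ha : StrictMono a)
    (η : ℝ)
    (hbdd : BddAbove (Set.range fun n => (a (n + 1) : ℝ) / (a n : ℝ)))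
    (hη : Filter.limsup (fun n => (a (n + 1) : ℝ) / (a n : ℝ)) atTop = η) :
    dimH {ξ : ℝ | (η : EReal) ≤ vhatbA b a ξ} = 0 := by
  have hapos : ∀ᶠ n in atTop, (0 : ℝ) < a n :=
    (eventually_ge_atTop 1).mono fun n hn => by exact_mod_cast Nat.lt_of_lt_of_le hn ha.le_apply
  have hmono : Monotone fun n => (a n : ℝ) := Nat.mono_cast.comp ha.monotone
  have hη1 : 1 ≤ η :=
    hη ▸ one_le_limsup_succ_div (u := fun n => (a n : ℝ)) hmono hapos hbdd.isBoundedUnder_of_range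
  have hratio : ∀ ε > 0, ∀ᶠ N in atTop, (a (N + 1) : ℝ) ≤ (η + ε) * a N := fun ε hε =>
    eventually_succ_le_mul_of_limsup_lt (u := fun n => (a n : ℝ)) hapos
      hbdd.isBoundedUnder_of_range (by linarith)
  refine le_antisymm ?_ zero_le
  calc dimH {ξ : ℝ | (η : EReal) ≤ vhatbA b a ξ}
      ≤ dimH (range ((↑) : ℚ → ℝ) ∪ {ξ | vbA b a ξ = ⊤}) := dimH_mono fun ξ hξ => by
        by_cases hirr : Irrational ξ
        · exact Or.inr (vbA_eq_top_of_le_vhatbA hb ha hη1 hratio hirr hξ)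
        · exact Or.inl (not_not.mp hirr)
    _ = 0 := by
      rw [dimH_union, dimH_countable (countable_range _), dimH_setOf_vbA_eq_top (by omega) ha,
        max_self]

theorem stmt7 (b : ℕ) (hb : 2 ≤ b) (a : ℕ → ℕ) (ha : StrictMono a)
    (hpos : ∀ n, 1 ≤ a n) (η : ℝ)
    (hbdd : BddAbove (Set.range fun n => (a (n + 1) : ℝ) / (a n : ℝ)))
    (hη : Filter.limsup (fun n => (a (n + 1) : ℝ) / (a n : ℝ)) atTop = η) :
    dimH {ξ : ℝ | (η : EReal) ≤ vhatbA b a ξ} = 0 :=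
  stmt7_general b hb a ha η hbdd hη
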